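/- Let n ≥ 1, m ≥ 2, and let L : ℤ × (ℝⁿ)^{m+1} → ℝ, written L(k, y₀, y₁, …, y_m), be continuously differentiable in its vector arguments. Let X : ℤ × ℝⁿ → ℝⁿ satisfy, for every k ∈ ℤ and every (y₀,…,y_m) ∈ (ℝⁿ)^{m+1}: Σ_{j=0}^{m} ∇_{y_j}L(k, y₀, …, y_m)·X(k+j, y_j) = 0. Then every sequence x : ℤ → ℝⁿ satisfying the discrete Euler–Lagrange equation Σ_{j=0}^{m} ∇_{y_j}L(k+m−j, x(k+m−j), …, x(k+2m−j)) = 0 for all k ∈ ℤ also satisfies: the function k ↦ Σ_{j=0}^{m−1} Ψ^j(k)·X(k+j, x(k+j)) is constant on ℤ, where Ψ⁰(k) = ∇_{y₀}L(k, x(k), …, x(k+m)) and Ψ^j(k) = Ψ^{j−1}(k+1) + ∇_{y_j}L(k, x(k), …, x(k+m)) for j = 1, 2, …, m−1. -/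

import Mathlib

open Fin.NatCast in
/-- `PsiAux n m L x j w k` is the inner product `Ψʲ(k)·w` of the quantity `Ψʲ(k)`
of the discrete Noether theorem (Theorem 4) with a fixed vector `w`, defined by
`Ψ⁰(k) = ∇_{y₀}L(k, x(k), …, x(k+m))` and
`Ψʲ(k) = Ψ^{j−1}(k+1) + ∇_{y_j}L(k, x(k), …, x(k+m))`. -/
noncomputable def PsiAux (n m : ℕ) (L : ℤ → (Fin (m+1) → Fin n → ℝ) → ℝ)
    (x : ℤ → Fin n → ℝ) : ℕ → (Fin n → ℝ) → ℤ → ℝ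
  | 0 => fun w k =>
      fderiv ℝ (L k) (fun r => x (k + (r.val : ℤ))) (Pi.single 0 w)
  | (j+1) => fun w k => PsiAux n m L x j w (k+1)
      + fderiv ℝ (L k) (fun r => x (k + (r.val : ℤ)))
          (Pi.single (((j+1 : ℕ) : Fin (m+1))) w)

/-!
The charge `F(k) = ∑_{j<m} Ψʲ(k)·X(k+j, x(k+j))` satisfies `F(k+1) = F(k)`.
Shifting `k` in `Ψʲ` is, by the recursion, passing from `Ψʲ` to `Ψʲ⁺¹` minus one partial
derivative of `L` at time `k`. Summed over `j`, this turns `F(k+1) - F(k)` into `Ψᵐ(k)·X(k+m, x(k+m))`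
minus the full invariance sum `∑_{j ≤ m} ∇_{y_j}L(k, …)·X(k+j, x(k+j))`. The first term is the
Euler–Lagrange expression at `k`, since unfolding the recursion gives
`Ψᵐ(k) = ∑_{i ≤ m} ∇_{y_i}L(k+m-i, …)`, and the second vanishes by invariance.
-/

namespace PsiAux

variable {n m : ℕ} (L : ℤ → (Fin (m+1) → Fin n → ℝ) → ℝ) (x : ℤ → Fin n → ℝ)

open Fin.NatCast in
/-- `∇_{y_i}L(t, x(t), …, x(t+m))·w`. -/
noncomputable def partialL (t : ℤ) (i : ℕ) (w : Fin n → ℝ) : ℝ :=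
  fderiv ℝ (L t) (fun r => x (t + (r.val : ℤ))) (Pi.single (i : Fin (m+1)) w)

lemma zero_eq (w : Fin n → ℝ) (k : ℤ) : PsiAux n m L x 0 w k = partialL L x k 0 w := by
  simp [PsiAux, partialL]

lemma succ_eq (j : ℕ) (w : Fin n → ℝ) (k : ℤ) :
    PsiAux n m L x (j + 1) w k = PsiAux n m L x j w (k + 1) + partialL L x k (j + 1) w :=
  rfl

lemma eq_sum_partialL (j : ℕ) (w : Fin n → ℝ) (k : ℤ) :
    PsiAux n m L x j w k = ∑ i ∈ Finset.range (j + 1), partialL L x (k + j - i) i w := by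
  induction j generalizing k with
  | zero => simp [zero_eq]
  | succ j ih =>
    rw [succ_eq, ih, Finset.sum_range_succ _ (j + 1)]
    push_cast
    congr 1
    · exact Finset.sum_congr rfl fun i _ => by ring_nf
    · ring_nf

lemma top_eq_eulerLagrange (w : Fin n → ℝ) (k : ℤ) :
    PsiAux n m L x m w k = ∑ j : Fin (m+1),
      fderiv ℝ (L (k + m - (j.val : ℤ))) (fun r => x (k + m - (j.val : ℤ) + (r.val : ℤ)))
        (Pi.single j w) := by
  rw [eq_sum_partialL, ← Fin.sum_univ_eq_sum_range]
  simp [partialL]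

end PsiAux

section Charge

variable {n m : ℕ} (L : ℤ → (Fin (m+1) → Fin n → ℝ) → ℝ) (X : ℤ → (Fin n → ℝ) → (Fin n → ℝ))
  (x : ℤ → Fin n → ℝ)

noncomputable def noetherCharge (k : ℤ) : ℝ :=
  ∑ j ∈ Finset.range m, PsiAux n m L x j (X (k + (j : ℤ)) (x (k + (j : ℤ)))) k

lemma noetherCharge_add_one
    (k : ℤ)
    (hsym : ∑ j : Fin (m+1), fderiv ℝ (L k) (fun r => x (k + (r.val : ℤ)))
      (Pi.single j (X (k + (j.val : ℤ)) (x (k + (j.val : ℤ))))) = 0)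
    (hEL : ∀ w : Fin n → ℝ, ∑ j : Fin (m+1),
      fderiv ℝ (L (k + m - (j.val : ℤ))) (fun r => x (k + m - (j.val : ℤ) + (r.val : ℤ)))
        (Pi.single j w) = 0) :
    noetherCharge L X x (k + 1) = noetherCharge L X x k := by
  set B : ℤ → Fin n → ℝ := fun t => X t (x t)
  set G : ℕ → ℝ := fun j => PsiAux n m L x j (B (k + j)) k
  set H : ℕ → ℝ := fun j => PsiAux.partialL L x k j (B (k + j))
  have shift : noetherCharge L X x (k + 1) =
      ∑ j ∈ Finset.range m, G (j + 1) - ∑ j ∈ Finset.range m, H (j + 1) := by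
    rw [noetherCharge, ← Finset.sum_sub_distrib]
    refine Finset.sum_congr rfl fun j _ => ?_
    simp only [G, H, B, PsiAux.succ_eq]
    push_cast
    ring_nf
  have top : G m = 0 := by
    simp only [G, PsiAux.top_eq_eulerLagrange, hEL]
  have reindex : ∑ j ∈ Finset.range m, G (j + 1) = noetherCharge L X x k - G 0 := by
    have := Finset.sum_range_succ' G m
    rw [Finset.sum_range_succ, top, add_zero] at this
    rw [noetherCharge, this, add_sub_cancel_right]
  have invariance : ∑ j ∈ Finset.range m, H (j + 1) + H 0 = 0 := by
    rw [← Finset.sum_range_succ', ← hsym,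
      ← Fin.sum_univ_eq_sum_range]
    simp [H, B, PsiAux.partialL]
  have bottom : G 0 = H 0 := PsiAux.zero_eq L x _ k
  rw [shift, reindex]
  linarith

end Charge

theorem stmt_6_general (n m : ℕ)
    (L : ℤ → (Fin (m+1) → Fin n → ℝ) → ℝ)
    (X : ℤ → (Fin n → ℝ) → (Fin n → ℝ))
    (hsym : ∀ (k : ℤ) (y : Fin (m+1) → Fin n → ℝ),
      (∑ j : Fin (m+1),
        fderiv ℝ (L k) y (Pi.single j (X (k + (j.val : ℤ)) (y j)))) = 0)
    (x : ℤ → Fin n → ℝ)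
    (hEL : ∀ (k : ℤ) (w : Fin n → ℝ),
      (∑ j : Fin (m+1),
        fderiv ℝ (L (k + m - (j.val : ℤ)))
          (fun r => x (k + m - (j.val : ℤ) + (r.val : ℤ)))
          (Pi.single j w)) = 0) :
    ∃ c : ℝ, ∀ k : ℤ,
      (∑ j ∈ Finset.range m,
        PsiAux n m L x j (X (k + (j : ℤ)) (x (k + (j : ℤ)))) k) = c := by
  have periodic : Function.Periodic (noetherCharge L X x) 1 :=
    fun k => noetherCharge_add_one L X x k (hsym k _) (hEL k)
  refine ⟨noetherCharge L X x 0, fun k => ?_⟩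
  change noetherCharge L X x k = _
  simpa only [Int.cast_id, mul_one] using periodic.int_mul_eq k

/-- Discrete-time Noether theorem for higher-order problems (Theorem 4). -/
theorem stmt_6 (n m : ℕ) (hn : 1 ≤ n) (hm : 2 ≤ m)
    (L : ℤ → (Fin (m+1) → Fin n → ℝ) → ℝ)
    (hL : ∀ k : ℤ, ContDiff ℝ 1 (L k))
    (X : ℤ → (Fin n → ℝ) → (Fin n → ℝ))
    (hsym : ∀ (k : ℤ) (y : Fin (m+1) → Fin n → ℝ),
      (∑ j : Fin (m+1),
        fderiv ℝ (L k) y (Pi.single j (X (k + (j.val : ℤ)) (y j)))) = 0)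
    (x : ℤ → Fin n → ℝ)
    (hEL : ∀ (k : ℤ) (w : Fin n → ℝ),
      (∑ j : Fin (m+1),
        fderiv ℝ (L (k + m - (j.val : ℤ)))
          (fun r => x (k + m - (j.val : ℤ) + (r.val : ℤ)))
          (Pi.single j w)) = 0) :
    ∃ c : ℝ, ∀ k : ℤ,
      (∑ j ∈ Finset.range m,
        PsiAux n m L x j (X (k + (j : ℤ)) (x (k + (j : ℤ)))) k) = c :=
  stmt_6_general n m L X hsym x hEL
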